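/- arXiv:0803.2389 — 5 statements merged into one kernel-verified Lean document; each statement's English description precedes it below -/
import Mathlib

section
/- Let h : [0,∞) → ℝ be bounded and continuous. Then for every x ≥ 0 the map x ↦ T_h x is differentiable, and its derivative equals exp(∫_0^1 h(T_{sh} x) ds); equivalently, the logarithmic derivative r_h(x) of the transformation T_h satisfies r_h(x) = ∫_0^1 h(T_{sh} x) ds. -/
open MeasureTheory Set Filter

/-- `J h x = ∫_0^x h(s) ds` for `x ≥ 0`, extended by `0` for `x < 0`. -/
noncomputable def J (h : ℝ → ℝ) (x : ℝ) : ℝ :=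
  if 0 ≤ x then ∫ s in (0:ℝ)..x, h s else 0

/-- `z` is a solution to the Cauchy problem `z'(s) = Jh(z(s))`, `z(0) = x`, on all of `ℝ`.
The time-stretching transformations are `T_h^t x = z_{x,h}(t)` and `T_h = T_h^1`;
thus `T_h y = W y 1` where `W y` solves the problem for `h` started at `y`, and
`T_{sh} x = Z s 1` where `Z s` solves the problem for `s • h` started at `x`. -/
def IsSol (h : ℝ → ℝ) (x : ℝ) (z : ℝ → ℝ) : Prop :=
  z 0 = x ∧ ∀ s : ℝ, HasDerivAt z (J h (z s)) s

open Topology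

/-!
If `w` and `u` solve `z' = J h z` from `x` and `y`, both stay nonnegative (a solution that vanishes
once is the zero solution), so `J h (u t) - J h (w t) = a t * (u t - w t)` with `a t` the mean of
`h` over the segment between `w t` and `u t`. Thus `u - w` solves a scalar linear equation and
`(T_h y - T_h x) / (y - x) = exp (∫₀¹ a)`. As `y → x`, continuous dependence on the initial value
and dominated convergence give `∫₀¹ a → ∫₀¹ h (w t) dt`, and rescaling time identifies `w s`
with `T_{sh} x`.
-/

noncomputable def segmentAverage (h : ℝ → ℝ) (a b : ℝ) : ℝ :=
  ∫ θ in (0:ℝ)..1, h (a + (b - a) * θ)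

section SegmentAverage

variable {h : ℝ → ℝ} {C : ℝ}

theorem integral_eq_mul_segmentAverage (h : ℝ → ℝ) (a b : ℝ) :
    ∫ s in a..b, h s = (b - a) * segmentAverage h a b := by
  have := intervalIntegral.smul_integral_comp_add_mul (a := 0) (b := 1) h (b - a) a
  simp only [mul_zero, add_zero, mul_one, add_sub_cancel, smul_eq_mul] at this
  rw [← this, segmentAverage]

@[simp]
theorem segmentAverage_self (h : ℝ → ℝ) (a : ℝ) : segmentAverage h a a = h a := by
  simp [segmentAverage]

theorem abs_segmentAverage_le (hb : ∀ s, |h s| ≤ C) (a b : ℝ) : |segmentAverage h a b| ≤ C := by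
  simpa [segmentAverage] using intervalIntegral.norm_integral_le_of_norm_le_const (a := 0) (b := 1)
    (f := fun θ => h (a + (b - a) * θ)) (C := C) fun θ _ => hb _

theorem continuous_segmentAverage (hc : Continuous h) :
    Continuous fun p : ℝ × ℝ => segmentAverage h p.1 p.2 :=
  intervalIntegral.continuous_parametric_intervalIntegral_of_continuous' (by fun_prop) 0 1

end SegmentAverage

section J

variable {h : ℝ → ℝ} {C : ℝ}

theorem J_eq_integral_max (h : ℝ → ℝ) (z : ℝ) : J h z = ∫ s in (0:ℝ)..max z 0, h s := by
  rcases le_total 0 z with hz | hz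
  · rw [J, if_pos hz, max_eq_left hz]
  · rw [max_eq_right hz, intervalIntegral.integral_same, J]
    split_ifs with hz'
    · simp [le_antisymm hz hz']
    · rfl

theorem J_smul (h : ℝ → ℝ) (c z : ℝ) : J (c • h) z = c * J h z := by
  simp [J_eq_integral_max, intervalIntegral.integral_const_mul]

theorem J_sub_J (hc : Continuous h) (a b : ℝ) :
    J h b - J h a = (max b 0 - max a 0) * segmentAverage h (max a 0) (max b 0) := by
  rw [J_eq_integral_max, J_eq_integral_max, intervalIntegral.integral_interval_sub_left
    (hc.intervalIntegrable _ _) (hc.intervalIntegrable _ _), integral_eq_mul_segmentAverage]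

theorem J_sub_J_of_nonneg (hc : Continuous h) {a b : ℝ} (ha : 0 ≤ a) (hb : 0 ≤ b) :
    J h b - J h a = (b - a) * segmentAverage h a b := by
  rw [J_sub_J hc, max_eq_left ha, max_eq_left hb]

theorem J_comp_max (h : ℝ → ℝ) : J (fun s => h (max s 0)) = J h := by
  funext z
  simp only [J_eq_integral_max]
  refine intervalIntegral.integral_congr fun s hs => ?_
  rw [uIcc_of_le (le_max_right z 0)] at hs
  simp only [max_eq_left hs.1]

theorem lipschitzWith_J (hc : Continuous h) (hb : ∀ s, |h s| ≤ C) :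
    LipschitzWith C.toNNReal (J h) := by
  refine LipschitzWith.of_dist_le_mul fun b a => ?_
  rw [Real.dist_eq, Real.dist_eq, J_sub_J hc, abs_mul, mul_comm,
    Real.coe_toNNReal _ ((abs_nonneg _).trans (hb 0))]
  exact mul_le_mul (abs_segmentAverage_le hb _ _) (abs_max_sub_max_le_abs _ _ _)
    (abs_nonneg _) ((abs_nonneg _).trans (hb 0))

end J

section Solutions

variable {h : ℝ → ℝ} {K : NNReal} {x : ℝ} {z : ℝ → ℝ}

theorem isSol_zero (h : ℝ → ℝ) : IsSol h 0 0 := by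
  refine ⟨rfl, fun _ => ?_⟩
  simp [J]

theorem IsSol.continuous (hz : IsSol h x z) : Continuous z :=
  continuous_iff_continuousAt.2 fun t => (hz.2 t).continuousAt

theorem IsSol.eq_of_apply_eq (hJ : LipschitzWith K (J h)) {x₁ x₂ : ℝ} {z₁ z₂ : ℝ → ℝ}
    (hz₁ : IsSol h x₁ z₁) (hz₂ : IsSol h x₂ z₂) {t₀ : ℝ} (heq : z₁ t₀ = z₂ t₀) : z₁ = z₂ :=
  ODE_solution_unique_univ (v := fun _ => J h) (s := fun _ => univ)
    (fun _ => hJ.lipschitzOnWith) (fun t => ⟨hz₁.2 t, trivial⟩) (fun t => ⟨hz₂.2 t, trivial⟩) heq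

theorem IsSol.nonneg (hJ : LipschitzWith K (J h)) (hz : IsSol h x z) (hx : 0 ≤ x) (t : ℝ) :
    0 ≤ z t := by
  by_contra! ht
  obtain ⟨t₀, -, ht₀⟩ : 0 ∈ z '' uIcc 0 t :=
    intermediate_value_uIcc hz.continuous.continuousOn (mem_uIcc.2 (Or.inr ⟨ht.le, hz.1 ▸ hx⟩))
  have hzero : z = 0 := hz.eq_of_apply_eq hJ (isSol_zero h) ht₀
  simp [hzero] at ht

theorem IsSol.abs_sub_le (hJ : LipschitzWith K (J h)) {x₁ x₂ : ℝ} {z₁ z₂ : ℝ → ℝ}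
    (hz₁ : IsSol h x₁ z₁) (hz₂ : IsSol h x₂ z₂) {t : ℝ} (ht : 0 ≤ t) :
    |z₁ t - z₂ t| ≤ |x₁ - x₂| * Real.exp (K * t) := by
  have := dist_le_of_trajectories_ODE (v := fun _ => J h) (fun _ => hJ)
    hz₁.continuous.continuousOn (fun t _ => (hz₁.2 t).hasDerivWithinAt)
    hz₂.continuous.continuousOn (fun t _ => (hz₂.2 t).hasDerivWithinAt) le_rfl t ⟨ht, le_rfl⟩
  simpa [Real.dist_eq, hz₁.1, hz₂.1] using this

theorem continuousWithinAt_apply_of_isSol (hJ : LipschitzWith K (J h)) {W : ℝ → ℝ → ℝ}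
    {s : Set ℝ} (hW : ∀ y ∈ s, IsSol h y (W y)) (hx : x ∈ s) {t : ℝ} (ht : 0 ≤ t) :
    ContinuousWithinAt (fun y => W y t) s x := by
  rw [ContinuousWithinAt, tendsto_iff_dist_tendsto_zero]
  have hlim : Tendsto (fun y => dist y x * Real.exp (K * t)) (𝓝[s] x) (𝓝 0) := by
    have hdist : Tendsto (fun y => dist y x) (𝓝[s] x) (𝓝 0) :=
      tendsto_iff_dist_tendsto_zero.1 (tendsto_id.mono_left nhdsWithin_le_nhds)
    simpa using hdist.mul_const (Real.exp (K * t))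
  refine squeeze_zero' (.of_forall fun _ => dist_nonneg) ?_ hlim
  filter_upwards [self_mem_nhdsWithin] with y hy
  simpa only [Real.dist_eq] using (hW y hy).abs_sub_le hJ (hW x hx) ht

theorem IsSol.comp_mul_right (hz : IsSol h x z) (s : ℝ) :
    IsSol (s • h) x (fun t => z (t * s)) := by
  refine ⟨by simpa using hz.1, fun t => ?_⟩
  show HasDerivAt _ (J (s • h) (z (t * s))) t
  rw [J_smul, mul_comm s]
  exact (hz.2 (t * s)).comp t (hasDerivAt_mul_const s)

theorem IsSol.eq_comp_mul_right (hJ : LipschitzWith K (J h)) {w : ℝ → ℝ} (hw : IsSol h x w)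
    {s : ℝ} (hz : IsSol (s • h) x z) : z = fun t => w (t * s) := by
  have hJs : LipschitzWith (‖s‖₊ * K) (J (s • h)) := by
    rw [show J (s • h) = (s • ·) ∘ J h from funext (J_smul h s)]
    exact (lipschitzWith_smul s).comp hJ
  exact hz.eq_of_apply_eq hJs (hw.comp_mul_right s) (t₀ := 0) (by simp [hz.1, hw.1])

end Solutions

theorem eq_mul_exp_integral_of_hasDerivAt {a D : ℝ → ℝ} (ha : Continuous a)
    (hD : ∀ t, HasDerivAt D (a t * D t) t) (t : ℝ) :
    D t = D 0 * Real.exp (∫ s in (0:ℝ)..t, a s) := by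
  set A : ℝ → ℝ := fun t => ∫ s in (0:ℝ)..t, a s
  have hA : ∀ t, HasDerivAt A (a t) t := fun t => (ha.integral_hasStrictDerivAt 0 t).hasDerivAt
  have hE : ∀ t, HasDerivAt (fun t => D t * Real.exp (-A t)) 0 t := fun t => by
    refine ((hD t).mul (hA t).neg.exp).congr_deriv ?_
    simp only [Pi.neg_apply]
    ring
  have hconst := is_const_of_deriv_eq_zero (fun t => (hE t).differentiableAt)
    (fun t => (hE t).deriv) t 0
  simp only [A, intervalIntegral.integral_same, neg_zero, Real.exp_zero, mul_one] at hconst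
  rw [← hconst, mul_assoc, ← Real.exp_add, neg_add_cancel, Real.exp_zero, mul_one]

section Derivative

variable {h : ℝ → ℝ} {C : ℝ} {K : NNReal}

theorem IsSol.sub_eq_mul_exp_integral (hc : Continuous h) (hJ : LipschitzWith K (J h))
    {x y : ℝ} {w u : ℝ → ℝ} (hw : IsSol h x w) (hu : IsSol h y u) (hx : 0 ≤ x) (hy : 0 ≤ y) :
    u 1 - w 1 = (y - x) * Real.exp (∫ t in (0:ℝ)..1, segmentAverage h (w t) (u t)) := by
  have hD : ∀ t, HasDerivAt (fun t => u t - w t)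
      (segmentAverage h (w t) (u t) * (u t - w t)) t := fun t => by
    rw [mul_comm, ← J_sub_J_of_nonneg hc (hw.nonneg hJ hx t) (hu.nonneg hJ hy t)]
    exact (hu.2 t).sub (hw.2 t)
  have ha : Continuous fun t => segmentAverage h (w t) (u t) :=
    (continuous_segmentAverage hc).comp (hw.continuous.prodMk hu.continuous)
  simpa [hu.1, hw.1] using eq_mul_exp_integral_of_hasDerivAt ha hD 1

theorem tendsto_integral_segmentAverage (hc : Continuous h) (hb : ∀ s, |h s| ≤ C)
    {W : ℝ → ℝ → ℝ} {s : Set ℝ} (hW : ∀ y ∈ s, IsSol h y (W y)) {x : ℝ} (hx : x ∈ s) :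
    Tendsto (fun y => ∫ t in (0:ℝ)..1, segmentAverage h (W x t) (W y t)) (𝓝[s] x)
      (𝓝 (∫ t in (0:ℝ)..1, h (W x t))) := by
  refine intervalIntegral.tendsto_integral_filter_of_dominated_convergence (fun _ => C) ?_ ?_
    intervalIntegrable_const ?_
  · filter_upwards [self_mem_nhdsWithin] with y hy
    exact ((continuous_segmentAverage hc).comp
      ((hW x hx).continuous.prodMk (hW y hy).continuous)).aestronglyMeasurable
  · exact .of_forall fun _ => .of_forall fun _ _ => abs_segmentAverage_le hb _ _
  · refine .of_forall fun t ht => ?_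
    have ht0 : 0 ≤ t := by
      rw [uIoc_of_le zero_le_one] at ht
      exact ht.1.le
    have hWt := continuousWithinAt_apply_of_isSol (lipschitzWith_J hc hb) hW hx ht0
    have := ((continuous_segmentAverage hc).tendsto (W x t, W x t)).comp
      (tendsto_const_nhds.prodMk_nhds hWt)
    rwa [segmentAverage_self] at this

theorem hasDerivWithinAt_apply_one_of_isSol (hc : Continuous h) (hb : ∀ s, |h s| ≤ C)
    {W : ℝ → ℝ → ℝ} (hW : ∀ y, 0 ≤ y → IsSol h y (W y)) {x : ℝ} (hx : 0 ≤ x) :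
    HasDerivWithinAt (fun y => W y 1) (Real.exp (∫ t in (0:ℝ)..1, h (W x t))) (Ici 0) x := by
  rw [hasDerivWithinAt_iff_tendsto_slope]
  refine ((tendsto_integral_segmentAverage hc hb (s := Ici 0) hW hx).rexp.mono_left
    (nhdsWithin_mono _ sdiff_subset)).congr' ?_
  filter_upwards [self_mem_nhdsWithin] with y ⟨hy, hyx⟩
  rw [slope_def_field, (hW x hx).sub_eq_mul_exp_integral hc (lipschitzWith_J hc hb) (hW y hy) hx hy,
    mul_div_cancel_left₀ _ (sub_ne_zero.2 hyx)]

end Derivative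

/-- For `h` bounded and continuous on `[0,∞)`, the map `x ↦ T_h x` is differentiable
(on `[0,∞)`) with derivative `exp (∫_0^1 h (T_{sh} x) ds)`. -/
theorem stmt3 (h : ℝ → ℝ) (C : ℝ) (hbdd : ∀ x : ℝ, 0 ≤ x → |h x| ≤ C)
    (hcont : ContinuousOn h (Set.Ici 0)) (x : ℝ) (hx : 0 ≤ x)
    (W : ℝ → ℝ → ℝ) (hW : ∀ y : ℝ, 0 ≤ y → IsSol h y (W y))
    (Z : ℝ → ℝ → ℝ) (hZ : ∀ s : ℝ, IsSol (s • h) x (Z s)) :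
    HasDerivWithinAt (fun y : ℝ => W y 1)
      (Real.exp (∫ s in (0:ℝ)..1, h (Z s 1))) (Set.Ici 0) x := by
  set g : ℝ → ℝ := fun s => h (max s 0)
  have hg : Continuous g :=
    hcont.comp_continuous (continuous_id.max continuous_const) fun s => le_max_right s 0
  have hgb : ∀ s, |g s| ≤ C := fun s => hbdd _ (le_max_right s 0)
  have hJg : J g = J h := J_comp_max h
  have hJ : LipschitzWith C.toNNReal (J h) := hJg ▸ lipschitzWith_J hg hgb
  have hWg : ∀ y, 0 ≤ y → IsSol g y (W y) := by simpa only [IsSol, hJg] using hW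
  have hgW : ∀ s, g (W x s) = h (Z s 1) := fun s => by
    rw [congrFun ((hW x hx).eq_comp_mul_right hJ (hZ s)) 1, one_mul]
    exact congrArg h (max_eq_left ((hW x hx).nonneg hJ hx s))
  simpa only [hgW] using hasDerivWithinAt_apply_one_of_isSol hg hgb hWg hx
end

section
/- Let (U, 𝒰, Π) be a measure space, c : U → ℝ^m measurable, a : ℝ^m → ℝ^m continuous, and U_N ∈ 𝒰 with Π(U_N) < ∞ for each N. Then for every N, the function (y, l) ↦ Π{u ∈ U_N : ⟨a(y + c(u)) − a(y), l⟩ ≠ 0} is lower semicontinuous on ℝ^m × ℝ^m. -/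
open MeasureTheory Set Filter

/-! Fatou's lemma applied to indicator functions: if every point of `t` eventually lies in `s i`,
then `1_t ≤ liminf 1_{s i}` pointwise, so `μ t ≤ liminf μ (s i)`. For `s x` indexed by a point of
a first-countable space, with `{x | u ∈ s x}` open for each `u`, this is lower semicontinuity of
`x ↦ μ (s x)`. Here `s (y, l) = {u ∈ U_N | ⟨a (y + c u) - a y, l⟩ ≠ 0}`, which is open in `(y, l)`
because `a` is continuous. -/

theorem MeasureTheory.measure_le_liminf_of_eventually_mem {α ι : Type*} [MeasurableSpace α]
    {μ : Measure α} {l : Filter ι} [l.IsCountablyGenerated] {s : ι → Set α}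
    (hs : ∀ i, MeasurableSet (s i)) {t : Set α} (ht : MeasurableSet t)
    (hts : ∀ u ∈ t, ∀ᶠ i in l, u ∈ s i) :
    μ t ≤ liminf (fun i => μ (s i)) l := by
  have hle : t.indicator 1 ≤ fun u => liminf (fun i => (s i).indicator (1 : α → ENNReal) u) l :=
    indicator_le fun u hu => le_liminf_of_le (by isBoundedDefault)
      ((hts u hu).mono fun i hi => (indicator_of_mem hi _).ge)
  calc μ t = ∫⁻ u, t.indicator 1 u ∂μ := (lintegral_indicator_one ht).symm
    _ ≤ ∫⁻ u, liminf (fun i => (s i).indicator 1 u) l ∂μ := lintegral_mono hle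
    _ ≤ liminf (fun i => ∫⁻ u, (s i).indicator 1 u ∂μ) l :=
      lintegral_liminf_le fun i => measurable_one.indicator (hs i)
    _ = liminf (fun i => μ (s i)) l := by simp only [lintegral_indicator_one (hs _)]

theorem MeasureTheory.lowerSemicontinuous_measure {α X : Type*} [MeasurableSpace α]
    [TopologicalSpace X] [FirstCountableTopology X] (μ : Measure α) {s : X → Set α}
    (hs : ∀ x, MeasurableSet (s x)) (hopen : ∀ u, IsOpen {x | u ∈ s x}) :
    LowerSemicontinuous fun x => μ (s x) :=
  lowerSemicontinuous_iff_le_liminf.2 fun x =>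
    measure_le_liminf_of_eventually_mem hs (hs x) fun u hu => (hopen u).mem_nhds hu

theorem stmt10_general (m : ℕ) (U : Type*) [MeasurableSpace U] (μ : Measure U)
    (c : U → EuclideanSpace ℝ (Fin m)) (hc : Measurable c)
    (a : EuclideanSpace ℝ (Fin m) → EuclideanSpace ℝ (Fin m)) (ha : Continuous a)
    (UN : Set U) (hUN : MeasurableSet UN) :
    LowerSemicontinuous (fun p : EuclideanSpace ℝ (Fin m) × EuclideanSpace ℝ (Fin m) =>
      μ {u | u ∈ UN ∧ (inner ℝ (a (p.1 + c u) - a p.1) p.2 : ℝ) ≠ 0}) := by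
  refine lowerSemicontinuous_measure μ (fun p => hUN.inter ?_) fun u => ?_
  · have ha_meas := ha.measurable
    have : Measurable fun u => (inner ℝ (a (p.1 + c u) - a p.1) p.2 : ℝ) := by fun_prop
    exact this (measurableSet_singleton 0).compl
  · exact isOpen_const.inter (isOpen_ne_fun (by fun_prop) continuous_const)

/-- For a measure `μ` (called `Π` in the paper) on `U`, `c : U → ℝ^m` measurable,
`a : ℝ^m → ℝ^m` continuous and `U_N` of finite measure, the function
`(y, l) ↦ Π {u ∈ U_N : ⟨a (y + c u) − a y, l⟩ ≠ 0}` is lower semicontinuous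
on `ℝ^m × ℝ^m`. -/
theorem stmt10 (m : ℕ) (U : Type*) [MeasurableSpace U] (μ : Measure U)
    (c : U → EuclideanSpace ℝ (Fin m)) (hc : Measurable c)
    (a : EuclideanSpace ℝ (Fin m) → EuclideanSpace ℝ (Fin m)) (ha : Continuous a)
    (UN : Set U) (hUN : MeasurableSet UN) (hUNfin : μ UN < ⊤) :
    LowerSemicontinuous (fun p : EuclideanSpace ℝ (Fin m) × EuclideanSpace ℝ (Fin m) =>
      μ {u | u ∈ UN ∧ (inner ℝ (a (p.1 + c u) - a p.1) p.2 : ℝ) ≠ 0}) :=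
  stmt10_general m U μ c hc a ha UN hUN
end

section
/- Let (U, 𝒰, Π) be a measure space, c : U → ℝ^m measurable, a : ℝ^m → ℝ^m continuous, and let U_N ∈ 𝒰, N ≥ 1, be an increasing sequence of sets with Π(U_N) < ∞ for every N and ∪_N U_N = U. Fix x ∈ ℝ^m and ε > 0, and suppose that Π{u ∈ U : ⟨Δ(y,u), l⟩ ≠ 0} = +∞ for every y with ‖y − x‖ ≤ ε and every unit vector l ∈ ℝ^m. Then γ_N := inf{Π{u ∈ U_N : ⟨Δ(y,u), l⟩ ≠ 0} : ‖y − x‖ ≤ ε, ‖l‖ = 1} → +∞ as N → +∞. -/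
open MeasureTheory Set Filter Topology

open scoped ENNReal

/-! The functions `φ_N (y, l) = Π {u ∈ U_N : ⟨Δ(y,u), l⟩ ≠ 0}` are lower semicontinuous, because
`{(y, l) : ⟨Δ(y,u), l⟩ ≠ 0}` is open for each `u`, and they increase to `∞` on the compact set
`B̄(x, ε) × S^{m-1}` by continuity of `Π` from below. A Dini-type argument then makes the
convergence uniform: the open sets `{φ_N > b}` increase and cover the compact set, so one of them
already covers it. -/

section Dini

variable {X ι α : Type*} [TopologicalSpace X] [SemilatticeSup ι] [Nonempty ι]
  [CompleteLinearOrder α] [TopologicalSpace α] [OrderTopology α] [DenselyOrdered α]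

theorem IsCompact.tendsto_iInf_nhds_top_of_monotone {K : Set X} (hK : IsCompact K)
    {f : ι → X → α} (hmono : Monotone f) (hlsc : ∀ i, LowerSemicontinuous (f i))
    (hlim : ∀ p ∈ K, Tendsto (f · p) atTop (𝓝 ⊤)) :
    Tendsto (fun i => ⨅ p ∈ K, f i p) atTop (𝓝 ⊤) := by
  refine tendsto_order.2 ⟨fun b hb => ?_, fun b hb => absurd hb not_top_lt⟩
  obtain ⟨b', hbb', hb'⟩ := exists_between hb
  have hcover : K ⊆ ⋃ i, f i ⁻¹' Ioi b' := fun p hp =>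
    mem_iUnion.2 ((hlim p hp).eventually (lt_mem_nhds hb')).exists
  have hdir : Monotone fun i => f i ⁻¹' Ioi b' := fun i j hij p hp =>
    lt_of_lt_of_le hp (hmono hij p)
  obtain ⟨i, hi⟩ := hK.elim_directed_cover _ (fun i => (hlsc i).isOpen_preimage b') hcover
    hdir.directed_le
  filter_upwards [eventually_ge_atTop i] with j hj
  exact hbb'.trans_le (le_iInf₂ fun p hp => (hi hp).le.trans (hmono hj p))

end Dini

section MeasureOfFamily

variable {X U : Type*} [TopologicalSpace X] [MeasurableSpace U] (μ : Measure U)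

theorem lowerSemicontinuous_measure_of_isOpen_setOf_mem [FirstCountableTopology X]
    {S : X → Set U} (hS : ∀ u, IsOpen {p | u ∈ S p}) :
    LowerSemicontinuous fun p => μ (S p) := by
  intro p b hb
  obtain ⟨V, hV⟩ := (𝓝 p).exists_antitone_basis
  have hmono : Monotone fun k => ⋂ q ∈ V k, S q := fun i j hij =>
    biInter_subset_biInter_left (hV.antitone hij)
  have hcover : S p ⊆ ⋃ k, ⋂ q ∈ V k, S q := fun u hu => by
    obtain ⟨k, hk⟩ := hV.mem_iff.1 ((hS u).mem_nhds hu)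
    exact mem_iUnion.2 ⟨k, mem_iInter₂.2 hk⟩
  obtain ⟨k, hk⟩ := lt_iSup_iff.1 <|
    hb.trans_le ((measure_mono hcover).trans_eq hmono.measure_iUnion)
  filter_upwards [hV.mem k] with q hq
  exact hk.trans_le (measure_mono (biInter_subset_of_mem hq))

theorem IsCompact.tendsto_iInf_measure_inter_nhds_top [FirstCountableTopology X]
    {ι : Type*} [SemilatticeSup ι] [Nonempty ι] [IsCountablyGenerated (atTop : Filter ι)]
    {K : Set X} (hK : IsCompact K) {S : X → Set U} (hS : ∀ u, IsOpen {p | u ∈ S p})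
    {A : ι → Set U} (hA : Monotone A) (hAU : ⋃ i, A i = univ) (hK_top : ∀ p ∈ K, μ (S p) = ∞) :
    Tendsto (fun i => ⨅ p ∈ K, μ (A i ∩ S p)) atTop (𝓝 ∞) := by
  refine hK.tendsto_iInf_nhds_top_of_monotone
    (fun i j hij p => measure_mono (inter_subset_inter_left _ (hA hij)))
    (fun i => lowerSemicontinuous_measure_of_isOpen_setOf_mem μ fun u => isOpen_const.inter (hS u))
    fun p hp => ?_
  have := tendsto_measure_iUnion_atTop (μ := μ) fun i j hij => inter_subset_inter_left (S p) (hA hij)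
  rwa [← iUnion_inter, hAU, univ_inter, hK_top p hp] at this

end MeasureOfFamily

theorem stmt11_general (m : ℕ) (U : Type*) [MeasurableSpace U] (μ : Measure U)
    (c : U → EuclideanSpace ℝ (Fin m))
    (a : EuclideanSpace ℝ (Fin m) → EuclideanSpace ℝ (Fin m)) (ha : Continuous a)
    (UN : ℕ → Set U) (hUNmono : Monotone UN)
    (hUNunion : (⋃ N, UN N) = Set.univ)
    (x : EuclideanSpace ℝ (Fin m)) (ε : ℝ)
    (hinf : ∀ y ∈ Metric.closedBall x ε, ∀ l : EuclideanSpace ℝ (Fin m), ‖l‖ = 1 →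
      μ {u | (inner ℝ (a (y + c u) - a y) l : ℝ) ≠ 0} = ⊤) :
    Tendsto (fun N : ℕ =>
        ⨅ (y : EuclideanSpace ℝ (Fin m)) (_ : y ∈ Metric.closedBall x ε)
          (l : EuclideanSpace ℝ (Fin m)) (_ : ‖l‖ = 1),
          μ {u | u ∈ UN N ∧ (inner ℝ (a (y + c u) - a y) l : ℝ) ≠ 0})
      atTop (nhds ⊤) := by
  have hS : ∀ u, IsOpen {p : EuclideanSpace ℝ (Fin m) × EuclideanSpace ℝ (Fin m) |
      (inner ℝ (a (p.1 + c u) - a p.1) p.2 : ℝ) ≠ 0} := fun u =>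
    isOpen_ne_fun (by fun_prop) continuous_const
  have hK := (isCompact_closedBall x ε).prod (isCompact_sphere (0 : EuclideanSpace ℝ (Fin m)) 1)
  refine tendsto_nhds_top_mono' (hK.tendsto_iInf_measure_inter_nhds_top μ hS hUNmono hUNunion
    fun p hp => hinf p.1 hp.1 p.2 (mem_sphere_zero_iff_norm.1 hp.2)) fun N => ?_
  exact le_iInf₂ fun y hy => le_iInf₂ fun l hl =>
    iInf₂_le (f := fun p _ => μ (UN N ∩ _)) (y, l) ⟨hy, mem_sphere_zero_iff_norm.2 hl⟩

/-- Relation (3.7) of the paper: if `Π {u : ⟨Δ(y,u), l⟩ ≠ 0} = ∞` for every `y` in the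
closed ball `B̄(x,ε)` and every unit vector `l`, and `U_N ↑ U` with `Π (U_N) < ∞`, then
`γ_N = inf_{‖y−x‖ ≤ ε, ‖l‖ = 1} Π {u ∈ U_N : ⟨Δ(y,u), l⟩ ≠ 0} → ∞` as `N → ∞`,
where `Δ(y,u) = a(y + c(u)) − a(y)`. (`μ` stands for the measure `Π`.) -/
theorem stmt11 (m : ℕ) (U : Type*) [MeasurableSpace U] (μ : Measure U)
    (c : U → EuclideanSpace ℝ (Fin m)) (hc : Measurable c)
    (a : EuclideanSpace ℝ (Fin m) → EuclideanSpace ℝ (Fin m)) (ha : Continuous a)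
    (UN : ℕ → Set U) (hUNmeas : ∀ N, MeasurableSet (UN N)) (hUNmono : Monotone UN)
    (hUNfin : ∀ N, μ (UN N) < ⊤) (hUNunion : (⋃ N, UN N) = Set.univ)
    (x : EuclideanSpace ℝ (Fin m)) (ε : ℝ) (hε : 0 < ε)
    (hinf : ∀ y ∈ Metric.closedBall x ε, ∀ l : EuclideanSpace ℝ (Fin m), ‖l‖ = 1 →
      μ {u | (inner ℝ (a (y + c u) - a y) l : ℝ) ≠ 0} = ⊤) :
    Tendsto (fun N : ℕ =>
        ⨅ (y : EuclideanSpace ℝ (Fin m)) (_ : y ∈ Metric.closedBall x ε)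
          (l : EuclideanSpace ℝ (Fin m)) (_ : ‖l‖ = 1),
          μ {u | u ∈ UN N ∧ (inner ℝ (a (y + c u) - a y) l : ℝ) ≠ 0})
      atTop (nhds ⊤) :=
  stmt11_general m U μ c a ha UN hUNmono hUNunion x ε hinf
end

section
/- Let (U, 𝒰, Π) be a measure space, c : U → ℝ measurable, a ∈ C¹(ℝ, ℝ), and x ∈ ℝ. Suppose: (i) Π{u : c(u) ≠ 0} = +∞; (ii) Π{u : |c(u)| ≥ r} < +∞ for every r > 0; (iii) there exists δ > 0 such that for every z ∈ ℝ the set {y ∈ (x−δ, x+δ) : a(y) = z} is finite. Then there exists ε > 0 such that for every y with |y − x| ≤ ε, Π{u : a(y + c(u)) − a(y) ≠ 0} = +∞. -/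
open MeasureTheory Set

/-!
If `a (y + c u) = a y` with `c u ≠ 0`, then either `|c u|` is not small, which happens on a set of
finite measure, or `y + c u` lies in the finite level set of `a` through `y` near `x`, so `c u`
takes one of finitely many nonzero values, each of which is taken on a set of finite measure.
Removing these finite-measure sets from `{u | c u ≠ 0}` leaves a set of infinite measure on which
`a (y + c u) ≠ a y`.
-/

lemma measure_eq_top_of_subset_union_of_lt_top {α : Type*} [MeasurableSpace α] {μ : Measure α}
    {s t r : Set α} (hs : μ s = ⊤) (hst : s ⊆ t ∪ r) (hr : μ r < ⊤) : μ t = ⊤ := by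
  by_contra ht
  have htr : μ (t ∪ r) < ⊤ :=
    (measure_union_le t r).trans_lt (ENNReal.add_lt_top.2 ⟨lt_top_iff_ne_top.2 ht, hr⟩)
  exact ((measure_mono hst).trans_lt htr).ne hs

section FiniteTails

variable {U : Type*} [MeasurableSpace U] {μ : Measure U} {c : U → ℝ}

lemma measure_preimage_finite_lt_top (h2 : ∀ r : ℝ, 0 < r → μ {u | r ≤ |c u|} < ⊤)
    {G : Set ℝ} (hG : G.Finite) (h0 : (0 : ℝ) ∉ G) : μ (c ⁻¹' G) < ⊤ := by
  rw [← biUnion_preimage_singleton]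
  refine measure_biUnion_lt_top hG fun t ht => ?_
  have ht0 : t ≠ 0 := fun h => h0 (h ▸ ht)
  refine (measure_mono fun u (hu : c u = t) => ?_).trans_lt (h2 |t| (abs_pos.2 ht0))
  simp [hu]

lemma measure_abs_ge_or_preimage_lt_top (h2 : ∀ r : ℝ, 0 < r → μ {u | r ≤ |c u|} < ⊤)
    {r : ℝ} (hr : 0 < r) {G : Set ℝ} (hG : G.Finite) (h0 : (0 : ℝ) ∉ G) :
    μ ({u | r ≤ |c u|} ∪ c ⁻¹' G) < ⊤ :=
  (measure_union_le _ _).trans_lt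
    (ENNReal.add_lt_top.2 ⟨h2 r hr, measure_preimage_finite_lt_top h2 hG h0⟩)

end FiniteTails

lemma finite_small_shifts_of_level_set_finite {a : ℝ → ℝ} {x y δ : ℝ}
    (hfin : {t | t ∈ Ioo (x - δ) (x + δ) ∧ a t = a y}.Finite) (hy : |y - x| ≤ δ / 2) :
    {t | |t| < δ / 2 ∧ a (y + t) = a y}.Finite := by
  refine (hfin.preimage (add_right_injective y).injOn).subset fun t ⟨ht, hat⟩ => ?_
  obtain ⟨hy1, hy2⟩ := abs_le.1 hy
  obtain ⟨ht1, ht2⟩ := abs_lt.1 ht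
  exact ⟨⟨by linarith, by linarith⟩, hat⟩

theorem stmt12_general (U : Type*) [MeasurableSpace U] (μ : Measure U)
    (c : U → ℝ) (a : ℝ → ℝ) (x : ℝ)
    (h1 : μ {u | c u ≠ 0} = ⊤)
    (h2 : ∀ r : ℝ, 0 < r → μ {u | r ≤ |c u|} < ⊤)
    (h3 : ∃ δ : ℝ, 0 < δ ∧ ∀ z : ℝ,
      Set.Finite {y | y ∈ Set.Ioo (x - δ) (x + δ) ∧ a y = z}) :
    ∃ ε : ℝ, 0 < ε ∧ ∀ y : ℝ, |y - x| ≤ ε →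
      μ {u | a (y + c u) - a y ≠ 0} = ⊤ := by
  obtain ⟨δ, hδ, h3⟩ := h3
  refine ⟨δ / 2, by positivity, fun y hy => ?_⟩
  set G := {t | |t| < δ / 2 ∧ a (y + t) = a y} \ {0}
  have hG : G.Finite := (finite_small_shifts_of_level_set_finite (h3 (a y)) hy).sdiff
  refine measure_eq_top_of_subset_union_of_lt_top h1 (fun u hu => ?_)
    (measure_abs_ge_or_preimage_lt_top h2 (half_pos hδ) hG (fun h => h.2 rfl))
  by_cases hau : a (y + c u) - a y = 0
  · by_cases hcu : δ / 2 ≤ |c u|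
    · exact Or.inr (Or.inl hcu)
    · exact Or.inr (Or.inr ⟨⟨not_le.1 hcu, sub_eq_zero.1 hau⟩, hu⟩)
  · exact Or.inl hau

/-- Proposition 4.3 of the paper (one-dimensional sufficient condition for (11)):
if `Π {u : c u ≠ 0} = ∞`, `Π {u : |c u| ≥ r} < ∞` for every `r > 0`, and for some
`δ > 0` every level set of `a` in `(x−δ, x+δ)` is finite, then there is `ε > 0` such
that `Π {u : a(y + c u) − a(y) ≠ 0} = ∞` for every `y` with `|y − x| ≤ ε`.
(`μ` stands for the measure `Π`.) -/
theorem stmt12 (U : Type*) [MeasurableSpace U] (μ : Measure U)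
    (c : U → ℝ) (hc : Measurable c) (a : ℝ → ℝ) (ha : ContDiff ℝ 1 a) (x : ℝ)
    (h1 : μ {u | c u ≠ 0} = ⊤)
    (h2 : ∀ r : ℝ, 0 < r → μ {u | r ≤ |c u|} < ⊤)
    (h3 : ∃ δ : ℝ, 0 < δ ∧ ∀ z : ℝ,
      Set.Finite {y | y ∈ Set.Ioo (x - δ) (x + δ) ∧ a y = z}) :
    ∃ ε : ℝ, 0 < ε ∧ ∀ y : ℝ, |y - x| ≤ ε →
      μ {u | a (y + c u) - a y ≠ 0} = ⊤ :=
  stmt12_general U μ c a x h1 h2 h3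
end

section
/- For every real t > 0 the following holds: for each N ∈ ℕ the series Σ_{k=1}^∞ (exp(2πi·N!/k!) − 1) converges absolutely in ℂ (its terms with k ≤ N vanish since N!/k! is then an integer, and |exp(iθ) − 1| ≤ |θ| controls the tail), and lim_{N→∞} exp( t · Σ_{k=1}^∞ (exp(2πi·N!/k!) − 1) ) = 1. -/
open Filter Complex
open scoped Nat

/-!
Since `k! ∣ N!` for `k ≤ N`, the terms with `k ≤ N` vanish. For the others,
`|exp(iθ) − 1| ≤ |θ|` and `N!/(N+1+j)! ≤ 2^{-j}/(N+1)` bound the `(N+1+j)`-th term by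
`2π·2^{-j}/(N+1)`, so the whole series is `O(1/N)` and its exponential tends to `1`.
-/

noncomputable def factorialPhase (N k : ℕ) : ℂ :=
  exp (((2 * Real.pi : ℝ) : ℂ) * I * ((N ! : ℂ) / (k ! : ℂ))) - 1

lemma norm_exp_two_pi_mul_I_mul_ofReal_sub_one_le (x : ℝ) :
    ‖exp (((2 * Real.pi : ℝ) : ℂ) * I * x) - 1‖ ≤ 2 * Real.pi * |x| := by
  have h := Real.norm_exp_I_mul_ofReal_sub_one_le (x := 2 * Real.pi * x)
  rw [Real.norm_eq_abs, abs_mul, abs_of_pos Real.two_pi_pos] at h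
  convert h using 4
  push_cast
  ring

lemma factorialPhase_eq_zero_of_le {N k : ℕ} (h : k ≤ N) : factorialPhase N k = 0 := by
  obtain ⟨m, hm⟩ := Nat.factorial_dvd_factorial h
  have hk : (k ! : ℂ) ≠ 0 := Nat.cast_ne_zero.2 k.factorial_ne_zero
  rw [factorialPhase, hm, Nat.cast_mul, mul_div_cancel_left₀ _ hk,
    show ((2 * Real.pi : ℝ) : ℂ) * I * (m : ℂ) = (m : ℤ) * (2 * Real.pi * I) by push_cast; ring,
    exp_int_mul_two_pi_mul_I, sub_self]

lemma factorial_div_factorial_add_succ_le (N j : ℕ) :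
    (N ! : ℝ) / (j + N + 1)! ≤ (N + 1 : ℝ)⁻¹ * (1 / 2) ^ j := by
  have key : N ! * (2 ^ j * (N + 1)) ≤ (j + N + 1)! := calc
    N ! * (2 ^ j * (N + 1)) = (N + 1)! * 2 ^ j := by rw [Nat.factorial_succ]; ring
    _ ≤ (N + 1)! * (N + 1 + 1) ^ j := by gcongr; omega
    _ ≤ (N + 1 + j)! := Nat.factorial_mul_pow_le_factorial
    _ = (j + N + 1)! := by rw [add_comm (N + 1), add_assoc]
  rw [one_div_pow, ← div_eq_inv_mul, div_div, div_le_div_iff₀ (by positivity) (by positivity),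
    one_mul]
  exact_mod_cast key

lemma norm_factorialPhase_add_succ_le (N j : ℕ) :
    ‖factorialPhase N (j + N + 1)‖ ≤ 2 * Real.pi / (N + 1) * (1 / 2) ^ j := calc
  ‖factorialPhase N (j + N + 1)‖ ≤ 2 * Real.pi * ((N ! : ℝ) / (j + N + 1)!) := by
    have h := norm_exp_two_pi_mul_I_mul_ofReal_sub_one_le ((N ! : ℝ) / (j + N + 1)!)
    rw [abs_of_nonneg (by positivity)] at h
    simpa [factorialPhase] using h
  _ ≤ 2 * Real.pi * ((N + 1 : ℝ)⁻¹ * (1 / 2) ^ j) := by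
    gcongr
    exact factorial_div_factorial_add_succ_le N j
  _ = 2 * Real.pi / (N + 1) * (1 / 2) ^ j := by ring

lemma summable_geometric_half_mul (c : ℝ) : Summable fun j : ℕ => c * (1 / 2 : ℝ) ^ j :=
  (summable_geometric_of_lt_one (by norm_num) (by norm_num)).mul_left c

lemma summable_norm_factorialPhase_add_succ (N : ℕ) :
    Summable fun j => ‖factorialPhase N (j + N + 1)‖ :=
  .of_nonneg_of_le (fun _ => norm_nonneg _) (norm_factorialPhase_add_succ_le N)
    (summable_geometric_half_mul _)

lemma summable_norm_factorialPhase_succ (N : ℕ) :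
    Summable fun k => ‖factorialPhase N (k + 1)‖ :=
  (summable_nat_add_iff N).mp (summable_norm_factorialPhase_add_succ N)

lemma norm_tsum_factorialPhase_succ_le (N : ℕ) :
    ‖∑' k, factorialPhase N (k + 1)‖ ≤ 4 * Real.pi / (N + 1) := by
  have hsum := summable_norm_factorialPhase_succ N
  have head : ∑ k ∈ Finset.range N, ‖factorialPhase N (k + 1)‖ = 0 :=
    Finset.sum_eq_zero fun k hk => by
      rw [factorialPhase_eq_zero_of_le (Finset.mem_range.mp hk), norm_zero]
  calc ‖∑' k, factorialPhase N (k + 1)‖ ≤ ∑' k, ‖factorialPhase N (k + 1)‖ :=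
        norm_tsum_le_tsum_norm hsum
    _ = ∑' j, ‖factorialPhase N (j + N + 1)‖ := by
        rw [← hsum.sum_add_tsum_nat_add N, head, zero_add]
    _ ≤ ∑' j, 2 * Real.pi / (N + 1) * (1 / 2 : ℝ) ^ j :=
        (summable_norm_factorialPhase_add_succ N).tsum_le_tsum
          (norm_factorialPhase_add_succ_le N) (summable_geometric_half_mul _)
    _ = 4 * Real.pi / (N + 1) := by
        rw [tsum_mul_left, tsum_geometric_two]
        ring

lemma tendsto_tsum_factorialPhase_succ :
    Tendsto (fun N : ℕ => ∑' k, factorialPhase N (k + 1)) atTop (nhds 0) := by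
  have h : Tendsto (fun N : ℕ => 4 * Real.pi * (1 / ((N : ℝ) + 1))) atTop (nhds 0) := by
    simpa using tendsto_one_div_add_atTop_nhds_zero_nat.const_mul (4 * Real.pi)
  refine squeeze_zero_norm (fun N => ?_) h
  rw [mul_one_div]
  exact norm_tsum_factorialPhase_succ_le N

theorem stmt16_general (t : ℝ) :
    (∀ N : ℕ, ∀ k : ℕ, 1 ≤ k → k ≤ N →
      Complex.exp (((2 * Real.pi : ℝ) : ℂ) * Complex.I *
        ((Nat.factorial N : ℂ) / (Nat.factorial k : ℂ))) - 1 = 0) ∧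
    (∀ N : ℕ, Summable (fun k : ℕ =>
      ‖(Complex.exp (((2 * Real.pi : ℝ) : ℂ) * Complex.I *
        ((Nat.factorial N : ℂ) / (Nat.factorial (k + 1) : ℂ))) - 1)‖)) ∧
    Tendsto (fun N : ℕ =>
        Complex.exp ((t : ℂ) * ∑' k : ℕ,
          (Complex.exp (((2 * Real.pi : ℝ) : ℂ) * Complex.I *
            ((Nat.factorial N : ℂ) / (Nat.factorial (k + 1) : ℂ))) - 1)))
      atTop (nhds 1) := by
  refine ⟨fun N k _ hk => factorialPhase_eq_zero_of_le hk, summable_norm_factorialPhase_succ, ?_⟩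
  have h := tendsto_tsum_factorialPhase_succ.const_mul (t : ℂ)
  rw [mul_zero] at h
  simpa only [factorialPhase, Function.comp_def, exp_zero] using (continuous_exp.tendsto 0).comp h

/-- Example 4.1 of the paper: for every `t > 0`, for each `N` the series
`Σ_{k ≥ 1} (exp(2πi·N!/k!) − 1)` converges absolutely (its terms with `k ≤ N` vanish
since `N!/k!` is then an integer), and
`exp(t · Σ_{k ≥ 1}(exp(2πi·N!/k!) − 1)) → 1` as `N → ∞`. -/
theorem stmt16 (t : ℝ) (ht : 0 < t) :
    (∀ N : ℕ, ∀ k : ℕ, 1 ≤ k → k ≤ N →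
      Complex.exp (((2 * Real.pi : ℝ) : ℂ) * Complex.I *
        ((Nat.factorial N : ℂ) / (Nat.factorial k : ℂ))) - 1 = 0) ∧
    (∀ N : ℕ, Summable (fun k : ℕ =>
      ‖(Complex.exp (((2 * Real.pi : ℝ) : ℂ) * Complex.I *
        ((Nat.factorial N : ℂ) / (Nat.factorial (k + 1) : ℂ))) - 1)‖)) ∧
    Tendsto (fun N : ℕ =>
        Complex.exp ((t : ℂ) * ∑' k : ℕ,
          (Complex.exp (((2 * Real.pi : ℝ) : ℂ) * Complex.I *
            ((Nat.factorial N : ℂ) / (Nat.factorial (k + 1) : ℂ))) - 1)))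
      atTop (nhds 1) :=
  stmt16_general t
end
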